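/- arXiv:0903.0898 — 7 statements merged into one kernel-verified Lean document; each statement's English description precedes it below -/
import Mathlib

section
/- The number of permutations of length 2n such that the even values occupying odd positions form a decreasing subsequence (i.e., avoiding an increasing pair among even values at odd positions) equals the sum over k from 0 to n of n!·(n−k)!·C(n,k)^3. -/
/-!
Read the values of a permutation at the odd positions as an embedding `g` of `n` positions into
`2n` values. Avoiding the pattern means exactly that the even values taken by `g` decrease, and
each embedding extends to `n!` permutations. Such a `g` is determined by the set of `k` positions
carrying even values, the set of `k` even values carried there (their order being forced), and an
arbitrary injection of the other `n - k` positions into the `n` odd values; this gives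
`C(n,k)² · n!/k!` embeddings, and `n!/k! = (n-k)! · C(n,k)`.
-/

open Finset Function OrderDual

section PermExtension

variable {α β : Type*} [Fintype α] [Fintype β]

theorem Function.Embedding.exists_perm_trans_eq (e g : α ↪ β) :
    ∃ π : Equiv.Perm β, e.trans π.toEmbedding = g := by
  classical
  refine ⟨(e.toEquivRange.symm.trans g.toEquivRange).extendSubtype, Embedding.ext fun a => ?_⟩
  simp [Equiv.extendSubtype_apply_of_mem _ _ (Set.mem_range_self a)]

theorem card_perm_trans_eq (e g : α ↪ β) :
    Nat.card {π : Equiv.Perm β // e.trans π.toEmbedding = g} =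
      (Fintype.card β - Fintype.card α).factorial := by
  classical
  obtain ⟨π₀, hπ₀⟩ := e.exists_perm_trans_eq g
  calc Nat.card {π : Equiv.Perm β // e.trans π.toEmbedding = g}
      = Nat.card {σ : Equiv.Perm β // ∀ b, ¬ b ∉ Set.range e → σ b = b} := by
        refine Nat.card_congr (Equiv.subtypeEquiv (Equiv.mulLeft π₀⁻¹) fun π => ?_)
        simp [← hπ₀, Embedding.ext_iff, Equiv.eq_symm_apply, eq_comm]
    _ = Nat.card (Equiv.Perm {b // b ∉ Set.range e}) :=
        (Nat.card_congr (Equiv.Perm.subtypeEquivSubtypePerm _)).symm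
    _ = (Fintype.card β - Fintype.card α).factorial := by
        rw [Nat.card_perm, Nat.card_eq_fintype_card, Fintype.card_subtype_compl,
          Set.card_range_of_injective e.injective]

theorem card_perm_trans_pred (e : α ↪ β) (P : (α ↪ β) → Prop) :
    Nat.card {π : Equiv.Perm β // P (e.trans π.toEmbedding)} =
      Nat.card {g : α ↪ β // P g} * (Fintype.card β - Fintype.card α).factorial := by
  classical
  let φ : {π : Equiv.Perm β // P (e.trans π.toEmbedding)} → {g // P g} := fun π => ⟨_, π.2⟩
  rw [← Nat.card_congr (Equiv.sigmaFiberEquiv φ), Nat.card_sigma,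
    sum_const_nat fun g _ => ?_, card_univ, Nat.card_eq_fintype_card]
  rw [← card_perm_trans_eq e g]
  exact Nat.card_congr
    { toFun := fun π => ⟨π.1.1, congrArg Subtype.val π.2⟩
      invFun := fun π => ⟨⟨π.1, by rw [π.2]; exact g.2⟩, Subtype.ext π.2⟩
      left_inv := fun _ => rfl
      right_inv := fun _ => rfl }

end PermExtension

theorem Nat.card_orderEmbedding (σ τ : Type*) [Fintype σ] [LinearOrder σ] [LinearOrder τ] :
    Nat.card (σ ↪o τ) = (Nat.card τ).choose (Fintype.card σ) := by
  rw [Nat.card_congr (OrderIso.orderEmbeddingCongr (Fintype.orderIsoFinOfCardEq σ rfl).symm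
    (OrderIso.refl τ)), Nat.card_congr Set.powersetCard.ofFinEmbEquiv, Set.powersetCard.card]

section DecreasingOnPredicate

variable {α β : Type*} [LinearOrder α] [LinearOrder β] {p : β → Prop} (s : Finset α)
  (f : s ↪o (Subtype p)ᵒᵈ) (u : {a // a ∉ s} ↪ {b // ¬ p b})

def glue : α → β := fun a => if h : a ∈ s then (ofDual (f ⟨a, h⟩) : Subtype p) else u ⟨a, h⟩

variable {s}

theorem glue_of_mem {a : α} (h : a ∈ s) : glue s f u a = (ofDual (f ⟨a, h⟩) : Subtype p) :=
  dif_pos h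

theorem glue_of_notMem {a : α} (h : a ∉ s) : glue s f u a = u ⟨a, h⟩ := dif_neg h

theorem p_glue_iff (a : α) : p (glue s f u a) ↔ a ∈ s := by
  by_cases h : a ∈ s
  · simpa [glue_of_mem f u h, h] using (ofDual (f ⟨a, h⟩)).2
  · simpa [glue_of_notMem f u h, h] using (u ⟨a, h⟩).2

theorem glue_injective : Injective (glue s f u) := by
  intro a b hab
  by_cases ha : a ∈ s <;> by_cases hb : b ∈ s
  · rw [glue_of_mem f u ha, glue_of_mem f u hb] at hab
    simpa using f.injective (Subtype.ext hab)
  · exact absurd ((p_glue_iff f u b).1 (hab ▸ (p_glue_iff f u a).2 ha)) hb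
  · exact absurd ((p_glue_iff f u a).1 (hab ▸ (p_glue_iff f u b).2 hb)) ha
  · rw [glue_of_notMem f u ha, glue_of_notMem f u hb] at hab
    simpa using u.injective (Subtype.ext hab)

theorem glue_strictAntiOn : StrictAntiOn (glue s f u) (glue s f u ⁻¹' {b | p b}) := by
  intro a ha b hb hab
  have ha : a ∈ s := (p_glue_iff f u a).1 ha
  have hb : b ∈ s := (p_glue_iff f u b).1 hb
  rw [glue_of_mem f u ha, glue_of_mem f u hb]
  exact f.strictMono (show (⟨a, ha⟩ : s) < ⟨b, hb⟩ from hab)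

variable (s) (p)

def decreasingFiberEquiv :
    {g : α ↪ β // StrictAntiOn g (g ⁻¹' {b | p b}) ∧ ∀ a, p (g a) ↔ a ∈ s} ≃
      (s ↪o (Subtype p)ᵒᵈ) × ({a // a ∉ s} ↪ {b // ¬ p b}) where
  toFun g :=
    (OrderEmbedding.ofStrictMono (fun a => toDual ⟨g.1 a, (g.2.2 a).2 a.2⟩)
      fun a b hab => g.2.1 ((g.2.2 a).2 a.2) ((g.2.2 b).2 b.2) hab,
     ⟨fun a => ⟨g.1 a, fun h => a.2 ((g.2.2 a).1 h)⟩,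
      fun a b h => Subtype.ext (g.1.injective (congrArg Subtype.val h))⟩)
  invFun fu := ⟨⟨glue s fu.1 fu.2, glue_injective fu.1 fu.2⟩, glue_strictAntiOn fu.1 fu.2,
    p_glue_iff fu.1 fu.2⟩
  left_inv g := by
    ext a
    by_cases h : a ∈ s
    · exact glue_of_mem _ _ h
    · exact glue_of_notMem _ _ h
  right_inv fu := by
    ext a
    · simp [glue_of_mem _ _ a.2]
    · simp [glue_of_notMem _ _ a.2]

def decreasingEquivSigma [Fintype α] [DecidablePred p] :
    {g : α ↪ β // StrictAntiOn g (g ⁻¹' {b | p b})} ≃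
      Σ s : Finset α, {g : α ↪ β // StrictAntiOn g (g ⁻¹' {b | p b}) ∧ ∀ a, p (g a) ↔ a ∈ s} where
  toFun g := ⟨univ.filter fun a => p (g.1 a), g.1, g.2, by simp⟩
  invFun x := ⟨x.2.1, x.2.2.1⟩
  left_inv _ := rfl
  right_inv x := Sigma.subtype_ext (by ext; simp [x.2.2.2]) rfl

theorem card_embedding_strictAntiOn_preimage [Fintype α] [Fintype β] [DecidablePred p] :
    Nat.card {g : α ↪ β // StrictAntiOn g (g ⁻¹' {b | p b})} =
      ∑ k ∈ range (Fintype.card α + 1), (Fintype.card α).choose k *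
        ((Nat.card (Subtype p)).choose k *
          (Nat.card {b // ¬ p b}).descFactorial (Fintype.card α - k)) := by
  classical
  have hfiber (s : Finset α) :
      Nat.card {g : α ↪ β // StrictAntiOn g (g ⁻¹' {b | p b}) ∧ ∀ a, p (g a) ↔ a ∈ s} =
        (Nat.card (Subtype p)).choose #s *
          (Nat.card {b // ¬ p b}).descFactorial (Fintype.card α - #s) := by
    have hcompl : Fintype.card {a // a ∉ s} = Fintype.card α - #s := by
      rw [Fintype.card_subtype_compl, Fintype.card_coe]
    rw [Nat.card_congr (decreasingFiberEquiv p s), Nat.card_prod, Nat.card_orderEmbedding,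
      Nat.card_eq_fintype_card (α := _ ↪ _), Fintype.card_embedding_eq, Fintype.card_coe,
      hcompl, ← Nat.card_eq_fintype_card]
    rfl
  rw [Nat.card_congr (decreasingEquivSigma p), Nat.card_sigma]
  simp_rw [hfiber]
  rw [← powerset_univ, sum_powerset_apply_card (fun k => (Nat.card (Subtype p)).choose k *
    (Nat.card {b // ¬ p b}).descFactorial (Fintype.card α - k)), card_univ]
  rfl

end DecreasingOnPredicate

section Doubling

variable (n : ℕ)

def double : Fin n ↪o Fin (2 * n) :=
  OrderEmbedding.ofStrictMono (fun a => ⟨2 * a, by omega⟩) fun a b h => by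
    simp only [Fin.lt_def] at h ⊢; omega

theorem coe_double (a : Fin n) : (double n a : ℕ) = 2 * a := rfl

theorem range_double : Set.range (double n) = {i : Fin (2 * n) | Even (i : ℕ)} := by
  ext i
  refine ⟨?_, fun ⟨a, ha⟩ => ⟨⟨a, by omega⟩, Fin.ext (by rw [coe_double, Fin.val_mk]; omega)⟩⟩
  rintro ⟨a, rfl⟩
  exact ⟨a, by rw [coe_double]; ring⟩

theorem card_not_odd : Nat.card {i : Fin (2 * n) // ¬ Odd (i : ℕ)} = n := by
  simp_rw [Nat.not_odd_iff_even]
  rw [← Set.coe_ofPred, ← range_double, Nat.card_range_of_injective (double n).injective,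
    Nat.card_eq_fintype_card, Fintype.card_fin]

theorem card_odd : Nat.card {i : Fin (2 * n) // Odd (i : ℕ)} = n := by
  have hle := Fintype.card_subtype_le fun i : Fin (2 * n) => Odd (i : ℕ)
  have hcompl := card_not_odd n
  rw [Nat.card_eq_fintype_card, Fintype.card_subtype_compl] at hcompl
  rw [Fintype.card_fin] at hle hcompl
  rw [Nat.card_eq_fintype_card]
  omega

theorem avoids_iff_strictAntiOn (π : Equiv.Perm (Fin (2 * n))) :
    (¬ ∃ i j : Fin (2 * n), i < j ∧ Even (i : ℕ) ∧ Even (j : ℕ) ∧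
        Odd ((π i : ℕ)) ∧ Odd ((π j : ℕ)) ∧ π i < π j) ↔
      StrictAntiOn ((double n).toEmbedding.trans π.toEmbedding)
        (((double n).toEmbedding.trans π.toEmbedding) ⁻¹' {b | Odd (b : ℕ)}) := by
  have hEven (i : Fin (2 * n)) : Even (i : ℕ) ↔ i ∈ Set.range (double n) := by
    rw [range_double]; rfl
  constructor
  · intro h a ha b hb hab
    refine lt_of_le_of_ne (not_lt.1 fun hlt => h ⟨_, _, (double n).lt_iff_lt.2 hab,
      (hEven _).2 ⟨a, rfl⟩, (hEven _).2 ⟨b, rfl⟩, ha, hb, hlt⟩) ?_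
    exact π.injective.ne ((double n).injective.ne hab.ne')
  · rintro h ⟨i, j, hij, hi, hj, hoi, hoj, hlt⟩
    obtain ⟨a, rfl⟩ := (hEven i).1 hi
    obtain ⟨b, rfl⟩ := (hEven j).1 hj
    exact (h hoi hoj ((double n).lt_iff_lt.1 hij)).asymm hlt

end Doubling

/-- `i : Fin (2 * n)` stands for the 1-indexed position or value `i + 1`: odd positions are the
even `i`, even values the odd `π i`. -/
theorem stmt0 (n : ℕ) :
    Nat.card {π : Equiv.Perm (Fin (2 * n)) //
      ¬ ∃ i j : Fin (2 * n), i < j ∧ Even (i : ℕ) ∧ Even (j : ℕ) ∧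
        Odd ((π i : ℕ)) ∧ Odd ((π j : ℕ)) ∧ π i < π j} =
    ∑ k ∈ Finset.range (n + 1),
      Nat.factorial n * Nat.factorial (n - k) * (Nat.choose n k) ^ 3 := by
  rw [Nat.card_congr (Equiv.subtypeEquivRight (avoids_iff_strictAntiOn n)),
    card_perm_trans_pred (double n).toEmbedding (fun g => StrictAntiOn g (g ⁻¹' {b | Odd (b : ℕ)})),
    card_embedding_strictAntiOn_preimage, card_odd, card_not_odd, Fintype.card_fin,
    Fintype.card_fin, sum_mul]
  refine sum_congr rfl fun k hk => ?_
  rw [two_mul, Nat.add_sub_cancel, Nat.descFactorial_eq_factorial_mul_choose,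
    Nat.choose_symm (Nat.lt_succ_iff.1 (mem_range.1 hk))]
  ring
end

section
/- For any fixed m, the number of permutations of length 2n containing exactly m occurrences of the pattern P (an occurrence of a classical pattern p of length t restricted so that all positions involved are odd and all values involved are even) equals the sum over k from 0 to n of n!·(n−k)!·C(n,k)^3·A_{k,m}, where A_{k,m} is the number of permutations of length k containing exactly m occurrences of p as a classical pattern. -/
/-- The number of occurrences of a classical pattern `p` (of length `t`) in a
permutation `σ` of length `k`: the number of strictly increasing position
sequences `f : Fin t → Fin k` such that `σ ∘ f` is order isomorphic to `p`. -/
noncomputable def occClassical {t k : ℕ} (p : Equiv.Perm (Fin t)) (σ : Equiv.Perm (Fin k)) : ℕ :=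
  Nat.card {f : Fin t → Fin k //
    (∀ a b : Fin t, a < b → f a < f b) ∧
    (∀ a b : Fin t, σ (f a) < σ (f b) ↔ p a < p b)}

/-- The number of occurrences of the PDVP `P` in a permutation `π` of length `2n`:
occurrences of `p` all of whose positions are odd (1-indexed, i.e. `Even (i : ℕ)`
for the 0-indexed `i`) and all of whose values are even (1-indexed, i.e.
`Odd ((π i : ℕ))`). -/
noncomputable def occPDVP {t n : ℕ} (p : Equiv.Perm (Fin t)) (π : Equiv.Perm (Fin (2 * n))) : ℕ :=
  Nat.card {f : Fin t → Fin (2 * n) //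
    (∀ a b : Fin t, a < b → f a < f b) ∧
    (∀ a : Fin t, Even ((f a : ℕ))) ∧
    (∀ a : Fin t, Odd ((π (f a) : ℕ))) ∧
    (∀ a b : Fin t, π (f a) < π (f b) ↔ p a < p b)}

/-
Only the restriction of `π` to the odd positions matters. The odd positions sent to even values
form a set `S` of some size `k`, and the occurrences of `P` in `π` are exactly the occurrences of
`p` in the pattern `σ ∈ 𝔖ₖ` of `π` on `S`. Conversely `π` is freely determined by `S`
(`C(n,k)` choices), the value set `π(S)` (`C(n,k)`), `σ`, the injection of the other `n - k` odd
positions into the `n` odd values (`n!/k! = (n-k)! C(n,k)`), and the bijection from the `n` even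
positions onto the `n` remaining values (`n!`).
-/

open Function

section PatternCount

variable {t : ℕ} {X X' Y Z : Type*}

noncomputable def patternCount (p : Equiv.Perm (Fin t)) [Preorder X] [Preorder Y] (φ : X → Y) :
    ℕ :=
  Nat.card {f : Fin t → X // StrictMono f ∧ ∀ a b, φ (f a) < φ (f b) ↔ p a < p b}

lemma occClassical_eq_patternCount {k : ℕ} (p : Equiv.Perm (Fin t)) (σ : Equiv.Perm (Fin k)) :
    occClassical p σ = patternCount p σ := rfl

lemma patternCount_comp_orderIso [Preorder X] [Preorder X'] [Preorder Y]
    (p : Equiv.Perm (Fin t)) (φ : X → Y) (e : X' ≃o X) :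
    patternCount p (φ ∘ e) = patternCount p φ :=
  Nat.card_congr
    { toFun f := ⟨e ∘ f.1, e.strictMono.comp f.2.1, f.2.2⟩
      invFun f :=
        ⟨e.symm ∘ f.1, e.symm.strictMono.comp f.2.1, by simpa [comp_def] using f.2.2⟩
      left_inv f := by ext; simp
      right_inv f := by ext; simp }

lemma patternCount_strictMono_comp [Preorder X] [LinearOrder Y] [Preorder Z]
    (p : Equiv.Perm (Fin t)) (φ : X → Y) {v : Y → Z} (hv : StrictMono v) :
    patternCount p (v ∘ φ) = patternCount p φ :=
  Nat.card_congr <| Equiv.subtypeEquivRight fun f => by simp only [comp_apply, hv.lt_iff_lt]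

end PatternCount

lemma Nat.card_embedding_eq (α β : Type*) [Fintype α] [Fintype β] :
    Nat.card (α ↪ β) = (Nat.card β).descFactorial (Nat.card α) := by
  simp only [Nat.card_eq_fintype_card, Fintype.card_embedding_eq]

lemma Nat.card_subtype_eq_sum_fiber {α β : Type*} [Finite α] [Fintype β] (g : α → β)
    (P : α → Prop) : Nat.card {x // P x} = ∑ y, Nat.card {x // g x = y ∧ P x} := by
  rw [← Nat.card_congr (Equiv.sigmaFiberEquiv fun x : {x // P x} => g x), Nat.card_sigma]
  exact Finset.sum_congr rfl fun y _ =>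
    Nat.card_congr <| (Equiv.subtypeSubtypeEquivSubtypeInter P (g · = y)).trans
      (Equiv.subtypeEquivRight fun _ => and_comm)

@[simp]
lemma Function.Embedding.coe_subtypeMap_apply {α β : Type*} {p : α → Prop} {q : β → Prop}
    (f : α ↪ β) (h : ∀ ⦃x⦄, p x → q (f x)) (x : {x // p x}) :
    (f.subtypeMap h x : β) = f x := rfl

section SortedFactorization

variable {Y : Type*} [LinearOrder Y] {k : ℕ}

lemma card_orderEmbedding_fin : Nat.card (Fin k ↪o Y) = (Nat.card Y).choose k := by
  rw [Nat.card_congr Set.powersetCard.ofFinEmbEquiv, Set.powersetCard.card]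

def permCompOrderEmbedding (x : Equiv.Perm (Fin k) × (Fin k ↪o Y)) : Fin k ↪ Y :=
  x.1.toEmbedding.trans x.2.toEmbedding

lemma permCompOrderEmbedding_bijective [Fintype Y] :
    Bijective (permCompOrderEmbedding (Y := Y) (k := k)) := by
  have : Finite (Fin k ↪o Y) := Finite.of_injective _ DFunLike.coe_injective
  refine (Nat.bijective_iff_injective_and_card _).2 ⟨?_, ?_⟩
  · rintro ⟨σ, v⟩ ⟨σ', v'⟩ h
    have hg : ∀ i, v (σ i) = v' (σ' i) := fun i => DFunLike.congr_fun h i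
    have hv : v = v' := OrderEmbedding.range_inj.1 <| by
      ext y
      exact ⟨fun ⟨i, hi⟩ => ⟨σ' (σ.symm i), by rw [← hg, σ.apply_symm_apply, hi]⟩,
        fun ⟨i, hi⟩ => ⟨σ (σ'.symm i), by rw [hg, σ'.apply_symm_apply, hi]⟩⟩
    subst hv
    exact Prod.ext (Equiv.ext fun i => v.injective (hg i)) rfl
  · rw [Nat.card_prod, Nat.card_perm, card_orderEmbedding_fin, Nat.card_embedding_eq,
      Nat.card_eq_fintype_card (α := Fin k), Fintype.card_fin,
      Nat.descFactorial_eq_factorial_mul_choose]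

lemma card_embedding_patternCount_eq_choose_mul {t : ℕ} (p : Equiv.Perm (Fin t)) (m : ℕ)
    [Fintype Y] (X : Type*) [LinearOrder X] [Fintype X] (hX : Fintype.card X = k) :
    Nat.card {g : X ↪ Y // patternCount p g = m} =
      (Nat.card Y).choose k * Nat.card {σ : Equiv.Perm (Fin k) // occClassical p σ = m} := by
  let e : Fin k ≃o X := Fintype.orderIsoFinOfCardEq X hX
  calc Nat.card {g : X ↪ Y // patternCount p g = m}
      = Nat.card {g : Fin k ↪ Y // patternCount p g = m} :=
        Nat.card_congr <| (Equiv.embeddingCongr e.toEquiv (Equiv.refl Y)).symm.subtypeEquiv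
          fun g => by rw [← patternCount_comp_orderIso p g e]; rfl
    _ = Nat.card {x : Equiv.Perm (Fin k) × (Fin k ↪o Y) // occClassical p x.1 = m} :=
        (Nat.card_congr <| (Equiv.ofBijective _ permCompOrderEmbedding_bijective).subtypeEquiv
          fun x => by
            rw [occClassical_eq_patternCount, ← patternCount_strictMono_comp p x.1 x.2.strictMono]
            rfl).symm
    _ = _ := by
        rw [Nat.card_congr
            (Equiv.prodSubtypeFstEquivSubtypeProd (p := (occClassical p · = m))),
          Nat.card_prod, card_orderEmbedding_fin, mul_comm]

end SortedFactorization

lemma card_perm_restrict_eq_mul_factorial {γ : Type*} [Fintype γ] (A : Set γ)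
    (Q : (A ↪ γ) → Prop) :
    Nat.card {π : Equiv.Perm γ // Q ((Embedding.subtype (· ∈ A)).trans π.toEmbedding)} =
      Nat.card {f : A ↪ γ // Q f} * (Nat.card ↥Aᶜ).factorial := by
  classical
  let E : Equiv.Perm γ ≃ Σ f : A ↪ γ, ↥Aᶜ ↪ ↥(Set.range f)ᶜ :=
    (Equiv.embeddingEquivOfFinite γ).symm.trans <|
      (Equiv.embeddingCongr (Equiv.Set.sumCompl A) (Equiv.refl γ)).symm.trans
        Equiv.sumEmbeddingEquivSigmaEmbeddingRestricted
  have hcard : ∀ f : A ↪ γ, Nat.card (↥Aᶜ ↪ ↥(Set.range f)ᶜ) = (Nat.card ↥Aᶜ).factorial :=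
    fun f => by
      rw [Nat.card_embedding_eq, Nat.card_eq_fintype_card, Nat.card_eq_fintype_card,
        Fintype.card_compl_set, Fintype.card_compl_set, Set.card_range_of_injective f.injective,
        Nat.descFactorial_self]
  refine (Nat.card_congr (E.subtypeEquiv (q := fun x => Q x.1) fun π => Iff.rfl)).trans ?_
  rw [Nat.card_congr (Equiv.subtypeSigmaEquiv _ _), Nat.card_sigma]
  simp only [hcard, Finset.sum_const, Finset.card_univ, smul_eq_mul, Nat.card_eq_fintype_card]

section Preimage

variable {α γ : Type*} (B : Set γ) (S : Set α) [DecidablePred (· ∈ B)] [DecidablePred (· ∈ S)]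

noncomputable def preimageFiberEquiv :
    {f : α ↪ γ // f ⁻¹' B = S} ≃ (S ↪ B) × (↥Sᶜ ↪ ↥Bᶜ) where
  toFun f :=
    (f.1.subtypeMap fun a ha => (Set.ext_iff.1 f.2 a).2 ha,
      f.1.subtypeMap fun a ha => mt (Set.ext_iff.1 f.2 a).1 ha)
  invFun g :=
    ⟨((Equiv.Set.sumCompl S).symm.toEmbedding.trans (g.1.sumMap g.2)).trans
        (Equiv.Set.sumCompl B).toEmbedding, by
      ext a
      by_cases ha : a ∈ S
      · simp [ha, Equiv.Set.sumCompl_symm_apply_of_mem]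
      · simp [ha, Equiv.Set.sumCompl_symm_apply_of_notMem]
        exact (g.2 ⟨a, ha⟩).2⟩
  left_inv f := by
    ext a
    by_cases ha : a ∈ S <;> simp [ha, Equiv.Set.sumCompl_symm_apply_of_mem,
      Equiv.Set.sumCompl_symm_apply_of_notMem]
  right_inv g := by ext a <;> simp

end Preimage

section PreimageCount

variable {α γ : Type*} [LinearOrder α] [LinearOrder γ] {t : ℕ}
  (p : Equiv.Perm (Fin t)) (m : ℕ) (B : Set γ)

lemma card_preimage_fiber_patternCount (S : Set α) :
    Nat.card {f : α ↪ γ // f ⁻¹' B = S ∧ patternCount p (B.restrictPreimage f) = m} =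
      Nat.card {g : S ↪ B // patternCount p g = m} * Nat.card (↥Sᶜ ↪ ↥Bᶜ) := by
  classical
  have hcount : ∀ f : {f : α ↪ γ // f ⁻¹' B = S},
      patternCount p (B.restrictPreimage f.1) = patternCount p (preimageFiberEquiv B S f).1 := by
    rintro ⟨f, rfl⟩
    rfl
  calc _ = Nat.card {f : {f : α ↪ γ // f ⁻¹' B = S} //
          patternCount p (B.restrictPreimage f.1) = m} :=
        Nat.card_congr (Equiv.subtypeSubtypeEquivSubtypeInter _ _).symm
    _ = Nat.card {x : (S ↪ B) × (↥Sᶜ ↪ ↥Bᶜ) // patternCount p x.1 = m} :=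
        Nat.card_congr <| (preimageFiberEquiv B S).subtypeEquiv fun f => by rw [hcount]
    _ = _ := by
        rw [Nat.card_congr (Equiv.prodSubtypeFstEquivSubtypeProd
          (p := fun g : S ↪ B => patternCount p g = m)), Nat.card_prod]

lemma card_embedding_patternCount_restrictPreimage_eq_sum [Fintype α] [Fintype γ] :
    Nat.card {f : α ↪ γ // patternCount p (B.restrictPreimage f) = m} =
      ∑ k ∈ Finset.range (Nat.card α + 1), (Nat.card α).choose k *
        ((Nat.card B).choose k * Nat.card {σ : Equiv.Perm (Fin k) // occClassical p σ = m} *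
          (Nat.card ↥Bᶜ).descFactorial (Nat.card α - k)) := by
  classical
  let F k := (Nat.card B).choose k * Nat.card {σ : Equiv.Perm (Fin k) // occClassical p σ = m} *
    (Nat.card ↥Bᶜ).descFactorial (Nat.card α - k)
  have hfiber : ∀ S : Finset α,
      Nat.card {f : α ↪ γ // f ⁻¹' B = S ∧ patternCount p (B.restrictPreimage f) = m} =
        F S.card := fun S => by
    rw [card_preimage_fiber_patternCount,
      card_embedding_patternCount_eq_choose_mul p m _ (k := S.card) (by simp),
      Nat.card_embedding_eq, Nat.card_eq_fintype_card (α := ↥(S : Set α)ᶜ), Fintype.card_compl_set]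
    simp only [F, Finset.coe_sort_coe, Fintype.card_coe, Nat.card_eq_fintype_card]
  calc _ = ∑ S : Finset α, F S.card := by
        rw [Nat.card_subtype_eq_sum_fiber fun f : α ↪ γ => (f ⁻¹' B).toFinset]
        refine Finset.sum_congr rfl fun S _ =>
          (Nat.card_congr (Equiv.subtypeEquivRight fun f => ?_)).trans (hfiber S)
        rw [← Finset.coe_inj, Set.coe_toFinset]
    _ = _ := by
        rw [← Finset.powerset_univ, Finset.sum_powerset_apply_card, Finset.card_univ,
          ← Nat.card_eq_fintype_card]
        rfl

end PreimageCount

def finEquivEvens (n : ℕ) : Fin n ≃ {i : Fin (2 * n) // Even (i : ℕ)} where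
  toFun x := ⟨⟨2 * x, by omega⟩, even_two_mul _⟩
  invFun i := ⟨i.1 / 2, by omega⟩
  left_inv x := by ext; simp
  right_inv := by rintro ⟨i, c, hc⟩; ext; simp; omega

def finEquivOdds (n : ℕ) : Fin n ≃ {i : Fin (2 * n) // Odd (i : ℕ)} where
  toFun x := ⟨⟨2 * x + 1, by omega⟩, odd_two_mul_add_one _⟩
  invFun i := ⟨i.1 / 2, by omega⟩
  left_inv x := by ext; simp; omega
  right_inv := by rintro ⟨i, c, hc⟩; ext; simp; omega

lemma occPDVP_eq_patternCount {t n : ℕ} (p : Equiv.Perm (Fin t))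
    (π : Equiv.Perm (Fin (2 * n))) :
    occPDVP p π = patternCount p
      ({v : Fin (2 * n) | Odd (v : ℕ)}.restrictPreimage
        (fun a : {i : Fin (2 * n) | Even (i : ℕ)} => π a)) :=
  Nat.card_congr
    { toFun F := ⟨fun a => ⟨⟨F.1 a, F.2.2.1 a⟩, F.2.2.2.1 a⟩, F.2.1, F.2.2.2.2⟩
      invFun f := ⟨fun a => (f.1 a).1.1, f.2.1, fun a => (f.1 a).1.2, fun a => (f.1 a).2, f.2.2⟩
      left_inv _ := rfl
      right_inv _ := rfl }

lemma card_setOf_even_fin (n : ℕ) : Nat.card ↥{i : Fin (2 * n) | Even (i : ℕ)} = n :=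
  (Nat.card_congr (finEquivEvens n)).symm.trans (Nat.card_fin n)

lemma card_setOf_odd_fin (n : ℕ) : Nat.card ↥{i : Fin (2 * n) | Odd (i : ℕ)} = n :=
  (Nat.card_congr (finEquivOdds n)).symm.trans (Nat.card_fin n)

lemma card_compl_setOf_even_fin (n : ℕ) : Nat.card ↥{i : Fin (2 * n) | Even (i : ℕ)}ᶜ = n :=
  (Nat.card_congr (Equiv.subtypeEquivRight fun _ => Nat.not_even_iff_odd)).trans
    (card_setOf_odd_fin n)

lemma card_compl_setOf_odd_fin (n : ℕ) : Nat.card ↥{i : Fin (2 * n) | Odd (i : ℕ)}ᶜ = n :=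
  (Nat.card_congr (Equiv.subtypeEquivRight fun _ => Nat.not_odd_iff_even)).trans
    (card_setOf_even_fin n)

theorem stmt1 (t : ℕ) (p : Equiv.Perm (Fin t)) (n m : ℕ) :
    Nat.card {π : Equiv.Perm (Fin (2 * n)) // occPDVP p π = m} =
    ∑ k ∈ Finset.range (n + 1),
      Nat.factorial n * Nat.factorial (n - k) * (Nat.choose n k) ^ 3 *
        Nat.card {σ : Equiv.Perm (Fin k) // occClassical p σ = m} := by
  calc _ = Nat.card {f : {i : Fin (2 * n) | Even (i : ℕ)} ↪ Fin (2 * n) //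
          patternCount p ({v : Fin (2 * n) | Odd (v : ℕ)}.restrictPreimage f) = m} *
            n.factorial := by
        simp_rw [occPDVP_eq_patternCount]
        exact (card_perm_restrict_eq_mul_factorial _
          fun f => patternCount p ({v : Fin (2 * n) | Odd (v : ℕ)}.restrictPreimage f) = m).trans
            (by rw [card_compl_setOf_even_fin])
    _ = _ := by
        rw [card_embedding_patternCount_restrictPreimage_eq_sum, card_setOf_even_fin,
          card_setOf_odd_fin, card_compl_setOf_odd_fin, Finset.sum_mul]
        refine Finset.sum_congr rfl fun k hk => ?_
        rw [Nat.descFactorial_eq_factorial_mul_choose,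
          Nat.choose_symm (Finset.mem_range_succ_iff.1 hk)]
        ring
end

section
/- For k ≥ 2 and n ≥ k+1, the number of permutations of length n that simultaneously avoid the consecutive patterns 231 and 132 and avoid any pair of positions i, i+k with π_{i+k} = π_i + 1 equals 3·2^{n−3}. -/
/-!
Avoiding the consecutive patterns 231 and 132 means having no peak, so such a permutation
decreases down to the value `0` and increases afterwards. It is determined by the set `S` of
values to the left of `0`, which can be any set not containing `0`, and the position of each
value is an explicit count in terms of `S` (`valleyPos`). For consecutive values `v, v + 1` the
position of `v + 1` minus that of `v` is `1` if both lie right of `0`, negative if `v + 1 ∈ S`,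
and `v + 1` if `v ∈ S` and `v + 1 ∉ S`. Hence the forbidden distance `k ≥ 2` occurs exactly
when `k - 1 ∈ S` and `k ∉ S`, and counting the admissible sets gives
`2 ^ (n - 1) - 2 ^ (n - 3)`.
-/

def AvoidsCons231and132 {n : ℕ} (π : Equiv.Perm (Fin n)) : Prop :=
  ∀ i j l : Fin n, (j : ℕ) = (i : ℕ) + 1 → (l : ℕ) = (i : ℕ) + 2 →
    ¬ (π l < π i ∧ π i < π j) ∧ ¬ (π i < π l ∧ π l < π j)

open Finset Function Order

section NoPeak

variable {α β : Type*} [LinearOrder α] [SuccOrder α] [IsSuccArchimedean α] [LinearOrder β]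
  {f : α → β}

theorem strictMonoOn_Ici_of_noPeak (hf : Injective f)
    (hpeak : ∀ a, ¬(f a < f (succ a) ∧ f (succ (succ a)) < f (succ a)))
    {a : α} (ha : f a ≤ f (succ a)) : StrictMonoOn f (Set.Ici a) := by
  refine strictMonoOn_of_lt_succ Set.ordConnected_Ici fun b hb hab _ => ?_
  induction hab using Succ.rec with
  | rfl => exact ha.lt_of_ne (hf.ne (lt_succ_of_not_isMax hb).ne)
  | succ b hab ih =>
    have hb' : ¬IsMax b := fun h => hb (h.succ_eq.symm ▸ h)
    have hasc := ih hb' (hab.trans (le_succ b))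
    exact (not_lt.mp fun h => hpeak b ⟨hasc, h⟩).lt_of_ne (hf.ne (lt_succ_of_not_isMax hb).ne)

theorem strictAntiOn_Iic_of_noPeak (hf : Injective f)
    (hpeak : ∀ a, ¬(f a < f (succ a) ∧ f (succ (succ a)) < f (succ a)))
    {m : α} (hm : ∀ b, f m ≤ f b) : StrictAntiOn f (Set.Iic m) := by
  refine strictAntiOn_of_succ_lt Set.ordConnected_Iic fun b hb _ hbm => ?_
  by_contra! hasc
  have hlt := strictMonoOn_Ici_of_noPeak hf hpeak hasc le_rfl
    ((lt_succ_of_not_isMax hb).le.trans hbm) ((lt_succ_of_not_isMax hb).trans_le hbm)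
  exact (hm b).not_gt hlt

end NoPeak

theorem Fin.val_orderSucc {n : ℕ} {a : Fin n} (ha : ¬IsMax a) :
    ((Order.succ a : Fin n) : ℕ) = a + 1 :=
  (Nat.covBy_iff_add_one_eq.mp (covBy_succ_of_not_isMax ha).coe_fin).symm

variable {n : ℕ}

theorem AvoidsCons231and132.noPeak {π : Equiv.Perm (Fin n)} (hπ : AvoidsCons231and132 π)
    (a : Fin n) : ¬(π a < π (succ a) ∧ π (succ (succ a)) < π (succ a)) := by
  rintro ⟨hij, hlj⟩
  have hmax : ¬IsMax (succ a) := fun h => hlj.ne (by rw [h.succ_eq])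
  have ha : ¬IsMax a := fun h => hmax (by rwa [h.succ_eq])
  have h1 := Fin.val_orderSucc ha
  have h2 := Fin.val_orderSucc hmax
  obtain ⟨h231, h132⟩ := hπ a (succ a) (succ (succ a)) h1 (by omega)
  have hla : succ (succ a) ≠ a := Fin.ne_of_val_ne (by omega)
  rcases lt_or_gt_of_ne (π.injective.ne hla) with hli | hil
  · exact h231 ⟨hli, hij⟩
  · exact h132 ⟨hil, hlj⟩

/-- The position of the value `v` in the valley permutation whose values left of `0` form `F`:
`F` is listed decreasingly, followed by its complement listed increasingly. -/
def valleyPos (F : Finset (Fin n)) (v : Fin n) : ℕ :=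
  if v ∈ F then #{s ∈ F | v < s} else #F + #{t ∈ Fᶜ | t < v}

section valleyPos

variable {F : Finset (Fin n)} {v w : Fin n}

theorem valleyPos_of_mem (hv : v ∈ F) : valleyPos F v = #{s ∈ F | v < s} := if_pos hv

theorem valleyPos_of_notMem (hv : v ∉ F) : valleyPos F v = #F + #{t ∈ Fᶜ | t < v} := if_neg hv

theorem valleyPos_lt_card_iff : valleyPos F v < #F ↔ v ∈ F := by
  by_cases hv : v ∈ F
  · simp only [valleyPos_of_mem hv, hv, iff_true]
    exact card_lt_card (filter_ssubset.mpr ⟨v, hv, lt_irrefl v⟩)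
  · simp [valleyPos_of_notMem hv, hv]

theorem valleyPos_lt (v : Fin n) : valleyPos F v < n := by
  by_cases hv : v ∈ F
  · exact (valleyPos_lt_card_iff.mpr hv).trans_le (card_le_univ F |>.trans_eq (Fintype.card_fin n))
  · have hlt : #{t ∈ Fᶜ | t < v} < #Fᶜ :=
      card_lt_card (filter_ssubset.mpr ⟨v, mem_compl.mpr hv, lt_irrefl v⟩)
    rw [valleyPos_of_notMem hv]
    have := card_add_card_compl F
    simp only [Fintype.card_fin] at this
    omega

theorem valleyPos_strictAntiOn : StrictAntiOn (valleyPos F) F := by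
  intro v hv w hw hvw
  rw [valleyPos_of_mem hv, valleyPos_of_mem hw]
  refine card_lt_card ⟨monotone_filter_right _ fun s _ hs => hvw.trans hs, fun h => ?_⟩
  simpa using h (mem_filter.mpr ⟨hw, hvw⟩)

theorem valleyPos_strictMonoOn : StrictMonoOn (valleyPos F) ↑Fᶜ := by
  intro v hv w hw hvw
  rw [mem_coe, mem_compl] at hv hw
  rw [valleyPos_of_notMem hv, valleyPos_of_notMem hw, add_lt_add_iff_left]
  refine card_lt_card ⟨monotone_filter_right _ fun s _ hs => hs.trans hvw, fun h => ?_⟩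
  simpa using h (mem_filter.mpr ⟨mem_compl.mpr hv, hvw⟩)

theorem valleyPos_injective : Injective (valleyPos F) := by
  intro v w h
  by_cases hv : v ∈ F <;> by_cases hw : w ∈ F
  · exact valleyPos_strictAntiOn.injOn hv hw h
  · exact absurd (h ▸ valleyPos_lt_card_iff.mpr hv) (valleyPos_lt_card_iff.not.mpr hw)
  · exact absurd (h ▸ valleyPos_lt_card_iff.mpr hw) (valleyPos_lt_card_iff.not.mpr hv)
  · exact valleyPos_strictMonoOn.injOn (by simpa using hv) (by simpa using hw) h

theorem valleyPos_zero [NeZero n] (h0 : 0 ∉ F) : valleyPos F 0 = #F := by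
  simp [valleyPos_of_notMem h0]

theorem valleyPos_succ_of_notMem (hvw : (w : ℕ) = v + 1) (hv : v ∉ F) (hw : w ∉ F) :
    valleyPos F w = valleyPos F v + 1 := by
  have hsplit : ({t ∈ Fᶜ | t < w} : Finset (Fin n)) = insert v {t ∈ Fᶜ | t < v} := by
    ext t
    simp only [mem_filter, mem_compl, mem_insert, Fin.lt_def, Fin.ext_iff]
    grind
  rw [valleyPos_of_notMem hv, valleyPos_of_notMem hw, hsplit, card_insert_of_notMem (by simp)]
  ring

theorem card_filter_lt_add_card_filter_compl_lt (F : Finset (Fin n)) (w : Fin n) :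
    #{s ∈ F | s < w} + #{t ∈ Fᶜ | t < w} = w := by
  rw [← Fin.card_Iio w, ← card_filter_add_card_filter_not (s := Iio w) (· ∈ F)]
  congr 2 <;> ext t <;> simp [and_comm]

theorem valleyPos_succ_of_mem_of_notMem (hvw : (w : ℕ) = v + 1) (hv : v ∈ F) (hw : w ∉ F) :
    valleyPos F w = valleyPos F v + w := by
  have hle : ({s ∈ F | ¬v < s} : Finset (Fin n)) = {s ∈ F | s < w} :=
    filter_congr fun s _ => by rw [not_lt, Fin.le_def, Fin.lt_def]; omega
  have hF := card_filter_add_card_filter_not (s := F) (v < ·)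
  rw [hle] at hF
  rw [valleyPos_of_mem hv, valleyPos_of_notMem hw,
    ← card_filter_lt_add_card_filter_compl_lt F w]
  omega

theorem valleyPos_add_eq_iff {k : ℕ} (hk : 2 ≤ k) (hvw : (w : ℕ) = v + 1) :
    valleyPos F w = valleyPos F v + k ↔ v ∈ F ∧ w ∉ F ∧ (w : ℕ) = k := by
  have hvw' : v < w := Fin.lt_def.mpr (by omega)
  by_cases hv : v ∈ F <;> by_cases hw : w ∈ F <;> simp only [hv, hw, true_and, not_true,
    not_false_eq_true, false_and, and_false, iff_false]
  · have := valleyPos_strictAntiOn hv hw hvw'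
    omega
  · rw [valleyPos_succ_of_mem_of_notMem hvw hv hw]; omega
  · have := valleyPos_lt_card_iff.mpr hw
    have := valleyPos_lt_card_iff.not.mpr hv
    omega
  · rw [valleyPos_succ_of_notMem hvw hv hw]; omega

end valleyPos

noncomputable def valleyPerm (F : Finset (Fin n)) : Equiv.Perm (Fin n) :=
  (Equiv.ofBijective (fun v => (⟨valleyPos F v, valleyPos_lt v⟩ : Fin n))
    (Finite.injective_iff_bijective.mp fun _ _ h =>
      valleyPos_injective (F := F) (Fin.mk.inj h))).symm

theorem val_valleyPerm_symm_apply (F : Finset (Fin n)) (v : Fin n) :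
    ((valleyPerm F).symm v : ℕ) = valleyPos F v := rfl

theorem valleyPos_valleyPerm_apply (F : Finset (Fin n)) (i : Fin n) :
    valleyPos F (valleyPerm F i) = i := by
  rw [← val_valleyPerm_symm_apply, Equiv.symm_apply_apply]

variable [NeZero n]

structure IsValley (π : Equiv.Perm (Fin n)) : Prop where
  strictAntiOn : StrictAntiOn π (Set.Iic (π.symm 0))
  strictMonoOn : StrictMonoOn π (Set.Ici (π.symm 0))

theorem avoidsCons231and132_iff_isValley {π : Equiv.Perm (Fin n)} :
    AvoidsCons231and132 π ↔ IsValley π := by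
  refine ⟨fun hπ => ?_, fun hπ i j l hj hl => ?_⟩
  · have hmin : ∀ b, π (π.symm 0) ≤ π b := fun b => by simp
    exact ⟨strictAntiOn_Iic_of_noPeak π.injective hπ.noPeak hmin,
      strictMonoOn_Ici_of_noPeak π.injective hπ.noPeak (hmin _)⟩
  · have hij : i < j := Fin.lt_def.mpr (by omega)
    have hjl : j < l := Fin.lt_def.mpr (by omega)
    by_cases hjm : j ≤ π.symm 0
    · have hji := hπ.strictAntiOn (Set.mem_Iic.mpr (hij.le.trans hjm)) hjm hij
      exact ⟨fun h => lt_asymm hji h.2, fun h => lt_asymm hji (h.1.trans h.2)⟩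
    · have hjl' := hπ.strictMonoOn (Set.mem_Ici.mpr (not_le.mp hjm).le)
        (Set.mem_Ici.mpr ((not_le.mp hjm).le.trans hjl.le)) hjl
      exact ⟨fun h => lt_asymm hjl' (h.1.trans h.2), fun h => lt_asymm hjl' h.2⟩

def leftSet (π : Equiv.Perm (Fin n)) : Finset (Fin n) :=
  (Iio (π.symm 0)).map π.toEmbedding

theorem mem_leftSet {π : Equiv.Perm (Fin n)} {v : Fin n} :
    v ∈ leftSet π ↔ π.symm v < π.symm 0 :=
  mem_map_equiv.trans mem_Iio

theorem card_leftSet (π : Equiv.Perm (Fin n)) : #(leftSet π) = π.symm 0 := by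
  rw [leftSet, card_map, Fin.card_Iio]

theorem IsValley.symm_apply {π : Equiv.Perm (Fin n)} (hπ : IsValley π) (v : Fin n) :
    (π.symm v : ℕ) = valleyPos (leftSet π) v := by
  set m := π.symm 0
  obtain ⟨p, rfl⟩ := π.surjective v
  rw [π.symm_apply_apply]
  by_cases hpm : p < m
  · have hS : ({s ∈ leftSet π | π p < s} : Finset (Fin n)) = (Iio p).map π.toEmbedding := by
      ext s
      obtain ⟨q, rfl⟩ := π.surjective s
      simp only [mem_filter, mem_leftSet, mem_map_equiv, mem_Iio, π.symm_apply_apply]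
      have hpq := hπ.strictAntiOn.lt_iff_gt (a := p) (b := q) (Set.mem_Iic.mpr hpm.le)
      exact ⟨fun h => (hpq (Set.mem_Iic.mpr h.1.le)).mp h.2,
        fun h => ⟨h.trans hpm, (hpq (Set.mem_Iic.mpr (h.trans hpm).le)).mpr h⟩⟩
    rw [valleyPos_of_mem (mem_leftSet.mpr (by simpa using hpm)), hS, card_map, Fin.card_Iio]
  · rw [not_lt] at hpm
    have hS :
        ({t ∈ (leftSet π)ᶜ | t < π p} : Finset (Fin n)) = (Ico m p).map π.toEmbedding := by
      ext t
      obtain ⟨q, rfl⟩ := π.surjective t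
      simp only [mem_filter, mem_compl, mem_leftSet, mem_map_equiv, mem_Ico, π.symm_apply_apply,
        not_lt]
      have hqp := hπ.strictMonoOn.lt_iff_lt (a := q) (b := p) (hb := Set.mem_Ici.mpr hpm)
      exact ⟨fun h => ⟨h.1, (hqp (Set.mem_Ici.mpr h.1)).mp h.2⟩,
        fun h => ⟨h.1, (hqp (Set.mem_Ici.mpr h.1)).mpr h.2⟩⟩
    rw [valleyPos_of_notMem (mt mem_leftSet.mp (by simpa using hpm)), hS, card_map,
      Fin.card_Ico, card_leftSet]
    omega

theorem zero_notMem_leftSet (π : Equiv.Perm (Fin n)) : 0 ∉ leftSet π := by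
  simp [mem_leftSet]

theorem IsValley.exists_add_eq_add_one_iff {π : Equiv.Perm (Fin n)} (hπ : IsValley π) {k : ℕ}
    (hk : 2 ≤ k) (hkn : k < n) :
    (∃ i j : Fin n, (j : ℕ) = i + k ∧ (π j : ℕ) = π i + 1) ↔
      (⟨k - 1, by omega⟩ : Fin n) ∈ leftSet π ∧ (⟨k, hkn⟩ : Fin n) ∉ leftSet π := by
  constructor
  · rintro ⟨i, j, hij, hval⟩
    obtain ⟨hi, hj, hjk⟩ := (valleyPos_add_eq_iff hk hval).mp (by
      rw [← hπ.symm_apply, ← hπ.symm_apply, π.symm_apply_apply, π.symm_apply_apply, hij])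
    rw [show π i = ⟨k - 1, by omega⟩ from Fin.ext (by simp; omega)] at hi
    rw [show π j = ⟨k, hkn⟩ from Fin.ext hjk] at hj
    exact ⟨hi, hj⟩
  · rintro ⟨hk1, hk'⟩
    refine ⟨π.symm ⟨k - 1, by omega⟩, π.symm ⟨k, hkn⟩, ?_, by simp; omega⟩
    rw [hπ.symm_apply, hπ.symm_apply]
    exact (valleyPos_add_eq_iff hk (by simp; omega)).mpr ⟨hk1, hk', rfl⟩

section

variable {F : Finset (Fin n)}

theorem leftSet_valleyPerm (h0 : 0 ∉ F) : leftSet (valleyPerm F) = F := by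
  ext v
  rw [mem_leftSet, Fin.lt_def, val_valleyPerm_symm_apply, val_valleyPerm_symm_apply,
    valleyPos_zero h0, valleyPos_lt_card_iff]

theorem isValley_valleyPerm (h0 : 0 ∉ F) : IsValley (valleyPerm F) := by
  have hm : ((valleyPerm F).symm 0 : ℕ) = #F := by
    rw [val_valleyPerm_symm_apply, valleyPos_zero h0]
  constructor
  · intro i _ j hj hij
    rw [Set.mem_Iic, Fin.le_def, hm] at hj
    rcases hj.lt_or_eq with hj | hj
    · have hmem : ∀ l : Fin n, (l : ℕ) < #F → valleyPerm F l ∈ F := fun l hl =>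
        valleyPos_lt_card_iff.mp (by rwa [valleyPos_valleyPerm_apply])
      rw [← valleyPos_strictAntiOn.lt_iff_gt (hmem i ((Fin.lt_def.mp hij).trans hj)) (hmem j hj),
        valleyPos_valleyPerm_apply, valleyPos_valleyPerm_apply]
      exact hij
    · have hj0 : valleyPerm F j = 0 := by
        rw [← (valleyPerm F).apply_symm_apply 0]; exact congrArg _ (Fin.ext (hj.trans hm.symm))
      rw [hj0, Fin.pos_iff_ne_zero]
      exact fun h => hij.ne ((valleyPerm F).injective (h.trans hj0.symm))
  · intro i hi j _ hij
    rw [Set.mem_Ici, Fin.le_def, hm] at hi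
    have hnot : ∀ l : Fin n, #F ≤ (l : ℕ) → valleyPerm F l ∈ (↑Fᶜ : Set (Fin n)) :=
      fun l hl => by
      rw [mem_coe, mem_compl, ← valleyPos_lt_card_iff, valleyPos_valleyPerm_apply]; omega
    rw [← valleyPos_strictMonoOn.lt_iff_lt (hnot i hi) (hnot j (hi.trans hij.le)),
      valleyPos_valleyPerm_apply, valleyPos_valleyPerm_apply]
    exact hij

theorem IsValley.valleyPerm_leftSet {π : Equiv.Perm (Fin n)} (hπ : IsValley π) :
    valleyPerm (leftSet π) = π :=
  Equiv.symm_bijective.injective (Equiv.ext fun v => Fin.ext (hπ.symm_apply v).symm)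

theorem card_isValley_subtype (p : Finset (Fin n) → Prop) :
    Nat.card {π : Equiv.Perm (Fin n) // IsValley π ∧ p (leftSet π)} =
      Nat.card {F : Finset (Fin n) // 0 ∉ F ∧ p F} :=
  Nat.card_congr
    { toFun := fun π => ⟨leftSet π.1, zero_notMem_leftSet π.1, π.2.2⟩
      invFun := fun F => ⟨valleyPerm F, isValley_valleyPerm F.2.1,
        (leftSet_valleyPerm F.2.1).symm ▸ F.2.2⟩
      left_inv := fun π => Subtype.ext π.2.1.valleyPerm_leftSet
      right_inv := fun F => Subtype.ext (leftSet_valleyPerm F.2.1) }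

end

theorem card_finset_notMem_and_mem_imp_mem {α : Type*} [Fintype α] [DecidableEq α] {a b c : α}
    (hab : a ≠ b) (hac : a ≠ c) (hbc : b ≠ c) (hα : 3 ≤ Fintype.card α) :
    Nat.card {F : Finset α // a ∉ F ∧ (b ∈ F → c ∈ F)} =
      3 * 2 ^ (Fintype.card α - 3) := by
  have hsets : ({F | a ∉ F ∧ (b ∈ F → c ∈ F)} : Finset (Finset α)) =
      Iic ({a}ᶜ : Finset α) \ Icc {b} {a, c}ᶜ := by
    ext F
    simp only [mem_filter, mem_univ, true_and, mem_sdiff, mem_Iic, mem_Icc, subset_iff,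
      mem_compl, mem_singleton, mem_insert]
    grind
  have hbac : ({b} : Finset α) ⊆ {a, c}ᶜ := by simp [hab.symm, hbc]
  rw [Nat.card_eq_fintype_card, Fintype.card_subtype, hsets,
    card_sdiff_of_subset (Icc_subset_Iic_self.trans (Iic_subset_Iic.mpr (by simp))),
    card_Iic_finset, card_Icc_finset hbac, card_compl, card_compl, card_singleton,
    card_pair hac, card_singleton]
  obtain ⟨m, hm⟩ : ∃ m, Fintype.card α = m + 3 := ⟨Fintype.card α - 3, by omega⟩
  rw [hm, show m + 3 - 1 = m + 2 by omega, show m + 3 - 2 - 1 = m by omega,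
    Nat.add_sub_cancel, pow_add]
  omega

/-- For `k ≥ 2` and `n ≥ k+1`, the number of permutations of length `n`
avoiding the consecutive patterns 231 and 132 and with no pair of positions
`i, i+k` such that `π (i+k) = π i + 1` equals `3·2^(n-3)`. -/
theorem stmt5 (k n : ℕ) (hk : 2 ≤ k) (hn : k + 1 ≤ n) :
    Nat.card {π : Equiv.Perm (Fin n) // AvoidsCons231and132 π ∧
      ¬ ∃ i j : Fin n, (j : ℕ) = (i : ℕ) + k ∧ ((π j : ℕ) = (π i : ℕ) + 1)} =
    3 * 2 ^ (n - 3) := by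
  have : NeZero n := ⟨by omega⟩
  set a : Fin n := ⟨k - 1, by omega⟩
  set b : Fin n := ⟨k, hn⟩
  have hcond : ∀ π : Equiv.Perm (Fin n), (AvoidsCons231and132 π ∧
      ¬ ∃ i j : Fin n, (j : ℕ) = (i : ℕ) + k ∧ ((π j : ℕ) = (π i : ℕ) + 1)) ↔
      IsValley π ∧ (a ∈ leftSet π → b ∈ leftSet π) := fun π => by
    rw [avoidsCons231and132_iff_isValley]
    exact and_congr_right fun hπ => by rw [hπ.exists_add_eq_add_one_iff hk hn, not_and_not_right]
  rw [Nat.card_congr (Equiv.subtypeEquivRight hcond),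
    card_isValley_subtype (fun F => a ∈ F → b ∈ F),
    card_finset_notMem_and_mem_imp_mem, Fintype.card_fin] <;>
    simp [a, b, Fin.ext_iff] <;> omega
end

section
/- The generating function A_3(q,z) = Σ_w q^{|w|} z^{s(w)}, where the sum is over all words w over the alphabet {1,2,3} and s(w) = |{i : w_{i+2} − w_i = 2}|, equals 1/((1 − q²(1−z))(1 − 3q − q²(z−1))). -/
/-- For a word `w` of length `n` over the alphabet {1,2,3} (modeled as
`Fin n → Fin 3`, the letter at position `i` being `(w i : ℕ) + 1`),
`sStat w = |{i : w_{i+2} − w_i = 2}|`. -/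
noncomputable def sStat {n : ℕ} (w : Fin n → Fin 3) : ℕ :=
  Nat.card {ij : Fin n × Fin n //
    (ij.2 : ℕ) = (ij.1 : ℕ) + 2 ∧ ((w ij.2 : ℕ) = (w ij.1 : ℕ) + 2)}

/-!
Prepending a letter `c` to a word `v` of length at least two creates exactly one new occurrence
when `c = 1` and the second letter of `v` is `3`, and none otherwise. Let `A n` be the weighted
count `∑_{|w| = n} z^{s(w)}` and `E n` the same sum over the words of length `n + 2` whose second
letter is `3`. With `u = 1 - z`, this gives `A (n+3) = 3 A (n+2) - u E n` and
`E (n+1) = 3 A (n+1) - u A n`, that is `(1 - 3q) A = 1 - u q³ E` and `E = (3 - u q) A`.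
Eliminating `E` leaves `(1 - 3q + 3u q³ - u² q⁴) A = 1`, and the quartic factors as
`(1 - u q²)(1 - 3q + u q²)`.
-/

lemma Fin.three_val_eq_val_add_two_iff {a b : Fin 3} : (b : ℕ) = a + 2 ↔ a = 0 ∧ b = 2 := by
  constructor
  · intro h; constructor <;> apply Fin.ext <;> simp <;> omega
  · rintro ⟨rfl, rfl⟩; rfl

lemma sStat_eq_zero_of_le_two {n : ℕ} (hn : n ≤ 2) (w : Fin n → Fin 3) : sStat w = 0 :=
  @Nat.card_of_isEmpty _ ⟨fun ⟨⟨_, j⟩, hij, _⟩ => by omega⟩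

lemma sStat_eq_sum {n : ℕ} (w : Fin (n + 2) → Fin 3) :
    sStat w = ∑ i : Fin n, if w i.castSucc.castSucc = 0 ∧ w i.succ.succ = 2 then 1 else 0 := by
  rw [Finset.sum_boole, ← Fintype.card_subtype, ← Nat.card_eq_fintype_card, sStat]
  refine Nat.card_congr
    { toFun := fun ⟨⟨i, j⟩, hij, hw⟩ => ⟨⟨i, by simp only at hij; omega⟩, ?_⟩
      invFun := fun ⟨i, hi⟩ => ⟨(i.castSucc.castSucc, i.succ.succ), rfl,
        Fin.three_val_eq_val_add_two_iff.2 hi⟩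
      left_inv := fun ⟨⟨i, j⟩, hij, hw⟩ => by ext <;> simp only at hij ⊢ <;> simp [hij]
      right_inv := fun _ => rfl }
  simp only at hij hw
  have hj : j = Fin.succ (Fin.succ ⟨i, by omega⟩) := Fin.ext (by simp [hij])
  rw [← hj]
  exact Fin.three_val_eq_val_add_two_iff.1 hw

lemma sStat_cons {n : ℕ} (c : Fin 3) (v : Fin (n + 2) → Fin 3) :
    sStat (Fin.cons c v : Fin (n + 3) → Fin 3)
      = sStat v + if c = 0 ∧ v 1 = 2 then 1 else 0 := by
  rw [sStat_eq_sum (n := n + 1), sStat_eq_sum, Fin.sum_univ_succ, add_comm]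
  rfl

lemma sStat_cons_of_ne_zero {n : ℕ} {c : Fin 3} (hc : c ≠ 0) (v : Fin n → Fin 3) :
    sStat (Fin.cons c v : Fin (n + 1) → Fin 3) = sStat v := by
  match n, v with
  | 0, v | 1, v => rw [sStat_eq_zero_of_le_two (by omega), sStat_eq_zero_of_le_two (by omega)]
  | n + 2, v => simp [sStat_cons, hc]

lemma sum_fin_succ_pi {α M : Type*} [Fintype α] [AddCommMonoid M] {n : ℕ}
    (f : (Fin (n + 1) → α) → M) :
    ∑ w, f w = ∑ a, ∑ v : Fin n → α, f (Fin.cons a v) := by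
  rw [← (Fin.consEquiv fun _ => α).sum_comp, Fintype.sum_prod_type]
  rfl

lemma sum_ite_head_eq {α M : Type*} [Fintype α] [DecidableEq α] [AddCommMonoid M]
    {n : ℕ} (a : α) (f : (Fin (n + 1) → α) → M) :
    ∑ w, (if w 0 = a then f w else 0) = ∑ v : Fin n → α, f (Fin.cons a v) := by
  simp only [sum_fin_succ_pi, Fin.cons_zero]
  rw [Finset.sum_comm]
  simp

section WeightedCount

variable {R : Type*} [CommRing R] (z : R)

noncomputable def weightSum (n : ℕ) : R := ∑ w : Fin n → Fin 3, z ^ sStat w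

noncomputable def weightSumSecondThree (n : ℕ) : R :=
  ∑ w : Fin (n + 2) → Fin 3, if w 1 = 2 then z ^ sStat w else 0

lemma weightSum_of_le_two {n : ℕ} (hn : n ≤ 2) : weightSum z n = 3 ^ n := by
  simp [weightSum, sStat_eq_zero_of_le_two hn]

lemma weightSumSecondThree_zero : weightSumSecondThree z 0 = 3 := by
  simp only [weightSumSecondThree, sStat_eq_zero_of_le_two le_rfl, pow_zero,
    sum_fin_succ_pi (n := 1), Fin.cons_one, sum_ite_head_eq]
  simp

lemma sum_pow_sStat_cons {n : ℕ} (v : Fin (n + 2) → Fin 3) :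
    ∑ c, z ^ sStat (Fin.cons c v : Fin (n + 3) → Fin 3)
      = 3 * z ^ sStat v - (1 - z) * if v 1 = 2 then z ^ sStat v else 0 := by
  simp only [Fin.sum_univ_three, sStat_cons]
  split_ifs <;> simp_all <;> ring

lemma weightSum_add_three (n : ℕ) :
    weightSum z (n + 3) = 3 * weightSum z (n + 2) - (1 - z) * weightSumSecondThree z n := by
  rw [weightSum, sum_fin_succ_pi, Finset.sum_comm]
  simp only [sum_pow_sStat_cons, Finset.sum_sub_distrib, ← Finset.mul_sum]
  rfl

lemma weightSumSecondThree_succ (n : ℕ) :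
    weightSumSecondThree z (n + 1)
      = 3 * weightSum z (n + 1) - (1 - z) * weightSum z n := by
  have h2 : (2 : Fin 3) ≠ 0 := by decide
  calc weightSumSecondThree z (n + 1)
      = ∑ v : Fin (n + 2) → Fin 3,
          if v 0 = 2 then ∑ c, z ^ sStat (Fin.cons c v : Fin (n + 3) → Fin 3) else 0 := by
        rw [weightSumSecondThree, sum_fin_succ_pi, Finset.sum_comm]
        simp only [Fin.cons_one, Finset.ite_sum_zero]
    _ = ∑ r : Fin (n + 1) → Fin 3,
          (3 * z ^ sStat r - (1 - z) * if r 0 = 2 then z ^ sStat r else 0) := by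
        simp only [sum_ite_head_eq, sum_pow_sStat_cons, Fin.cons_one,
          sStat_cons_of_ne_zero h2]
    _ = 3 * weightSum z (n + 1) - (1 - z) * weightSum z n := by
        simp only [Finset.sum_sub_distrib, ← Finset.mul_sum, sum_ite_head_eq,
          sStat_cons_of_ne_zero h2]
        rfl

open PowerSeries

lemma one_sub_three_X_mul_mk_weightSum :
    (1 - 3 * X) * mk (weightSum z)
      = 1 - (1 - C z) * X ^ 3 * mk (weightSumSecondThree z) := by
  rw [← map_ofNat C 3]
  ext n
  rcases n with _ | _ | _ | n
  all_goals simp [sub_mul, mul_assoc, coeff_X_pow_mul', weightSum_of_le_two, weightSum_add_three]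
  norm_num

lemma mk_weightSumSecondThree :
    mk (weightSumSecondThree z) = (3 - (1 - C z) * X) * mk (weightSum z) := by
  rw [← map_ofNat C 3]
  ext n
  rcases n with _ | n
  all_goals simp [sub_mul, mul_assoc, weightSum_of_le_two, weightSumSecondThree_zero,
    weightSumSecondThree_succ]

theorem mul_mk_weightSum :
    (1 - X ^ 2 * (1 - C z)) * (1 - (3 * X + X ^ 2 * (C z - 1))) * mk (weightSum z) = 1 := by
  linear_combination one_sub_three_X_mul_mk_weightSum z
    - (1 - C z) * X ^ 3 * mk_weightSumSecondThree z

end WeightedCount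

/-- `A_3(q,z) = Σ_w q^{|w|} z^{s(w)} = 1/((1 − q²(1−z))(1 − 3q − q²(z−1)))`,
as an identity of formal power series in `q` over `ℤ[z]`. -/
theorem stmt8 :
    (1 - PowerSeries.X ^ 2 *
        (1 - PowerSeries.C (Polynomial.X : Polynomial ℤ))) *
    (1 - (3 * PowerSeries.X + PowerSeries.X ^ 2 *
        (PowerSeries.C (Polynomial.X : Polynomial ℤ) - 1))) *
    PowerSeries.mk (fun n => ∑ w : Fin n → Fin 3,
        (Polynomial.X : Polynomial ℤ) ^ sStat w) = 1 :=
  mul_mk_weightSum Polynomial.X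
end

section
/- The number of words of length 2n over {1,2,3} with no index i such that w_{i+2} − w_i = 2 is (F(2n))², where F(m) is the m-th Fibonacci number with F(0)=1, F(1)=1 (i.e., 1/(1−3q+q²) = Σ F(2n) q^n). -/
/-!
A position `i` only interacts with `i + 2`, so a word of length `2n` is admissible exactly when
its even-indexed and its odd-indexed subwords, each of length `n`, contain no letter `1`
immediately followed by `3`. Counting such words according to the letter they are allowed to
follow gives a three-state transfer recursion whose solution is `fib (2n + 2)`; the count for
length `2n` is therefore its square. The generating-function identity is the recurrence
`fib (k + 4) = 3 fib (k + 2) - fib k`.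
-/

open Finset List

section Interleave

variable {α : Type*} (r : α → α → Prop)

def finInterleave (d n : ℕ) : Fin d × Fin n ≃ Fin (d * n) :=
  (Equiv.prodComm _ _).trans (finProdFinEquiv.trans (finCongr (Nat.mul_comm n d)))

@[simp]
theorem finInterleave_val {d n : ℕ} (p : Fin d × Fin n) :
    (finInterleave d n p : ℕ) = p.1 + d * p.2 := rfl

theorem forall_gap_iff_forall_isChain {d n : ℕ} (w : Fin (d * n) → α) :
    (∀ i j : Fin (d * n), (j : ℕ) = i + d → r (w i) (w j)) ↔
      ∀ b : Fin d, (ofFn fun k => w (finInterleave d n (b, k))).IsChain r := by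
  simp only [isChain_ofFn]
  constructor
  · intro h b k hk
    exact h _ _ (by simp only [finInterleave_val]; ring)
  · intro h i j hij
    obtain ⟨⟨b, k⟩, rfl⟩ := (finInterleave d n).surjective i
    simp only [finInterleave_val] at hij
    have hk : (k : ℕ) + 1 < n := by nlinarith [j.isLt, b.isLt]
    convert h b k hk
    ext
    rw [finInterleave_val, hij, mul_add, mul_one, add_assoc]

theorem card_forall_gap_eq_card_isChain_pow (d n : ℕ) :
    Nat.card {w : Fin (d * n) → α // ∀ i j : Fin (d * n), (j : ℕ) = i + d → r (w i) (w j)} =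
      Nat.card {x : Fin n → α // (ofFn x).IsChain r} ^ d := by
  let split : (Fin (d * n) → α) ≃ (Fin d → Fin n → α) :=
    ((finInterleave d n).arrowCongr (Equiv.refl α)).symm.trans (Equiv.curry _ _ _)
  rw [Nat.card_congr ((split.subtypeEquiv (q := fun f => ∀ b, (ofFn (f b)).IsChain r)
    fun w => forall_gap_iff_forall_isChain r w).trans
      (Equiv.subtypePiEquivPi (p := fun _ x => (ofFn x).IsChain r))), Nat.card_fun,
    Nat.card_fin]

end Interleave

theorem isChain_cons_iff_of_forall {α : Type*} {r : α → α → Prop} {a : α} (h : ∀ b, r a b)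
    (l : List α) : (a :: l).IsChain r ↔ l.IsChain r := by
  simp [isChain_cons, h]

theorem card_isChain_cons_succ {α : Type*} [Fintype α] (r : α → α → Prop) [DecidableRel r]
    (a : α) (n : ℕ) :
    Fintype.card {x : Fin (n + 1) → α // (a :: ofFn x).IsChain r} =
      ∑ b with r a b, Fintype.card {x : Fin n → α // (b :: ofFn x).IsChain r} := by
  simp only [Fintype.card_subtype, card_filter, sum_filter]
  rw [← (Fin.consEquiv fun _ => α).sum_comp, Fintype.sum_prod_type]
  refine sum_congr rfl fun b _ => ?_
  simp only [Fin.consEquiv_apply, ofFn_succ, Fin.cons_zero, Fin.cons_succ, isChain_cons_cons]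
  split_ifs with hab <;> simp [hab]

def NotRiseTwo (a b : Fin 3) : Prop := (b : ℕ) ≠ a + 2

instance : DecidableRel NotRiseTwo := fun a b => inferInstanceAs (Decidable ((b : ℕ) ≠ a + 2))

theorem card_isChain_cons_notRiseTwo (n : ℕ) (a : Fin 3) :
    Fintype.card {x : Fin n → Fin 3 // (a :: ofFn x).IsChain NotRiseTwo} =
      if a = 0 then Nat.fib (2 * n + 1) else Nat.fib (2 * n + 2) := by
  induction n generalizing a with
  | zero => fin_cases a <;> rfl
  | succ n ih =>
    have odd : Nat.fib (2 * (n + 1) + 1) = Nat.fib (2 * n + 1) + Nat.fib (2 * n + 2) :=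
      Nat.fib_add_two
    have even : Nat.fib (2 * (n + 1) + 2) = Nat.fib (2 * n + 1) + 2 * Nat.fib (2 * n + 2) := by
      rw [show 2 * (n + 1) + 2 = 2 * n + 2 + 2 by ring, Nat.fib_add_two,
        Nat.fib_add_two (n := 2 * n + 1)]
      ring
    rw [card_isChain_cons_succ, sum_filter, Fin.sum_univ_three, ih, ih, ih]
    fin_cases a <;> simp [NotRiseTwo, odd, even] <;> ring

theorem card_isChain_notRiseTwo (n : ℕ) :
    Nat.card {x : Fin n → Fin 3 // (ofFn x).IsChain NotRiseTwo} = Nat.fib (2 * n + 2) := by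
  have one_free : ∀ b, NotRiseTwo 1 b := fun b => by simp only [NotRiseTwo]; omega
  rw [← Nat.card_congr (Equiv.subtypeEquivRight fun x => isChain_cons_iff_of_forall one_free _),
    Nat.card_eq_fintype_card, card_isChain_cons_notRiseTwo, if_neg one_ne_zero]

open PowerSeries in
theorem one_sub_C_mul_X_add_C_mul_X_sq_mul_mk {R : Type*} [CommRing R] (a b : R) (s : ℕ → R)
    (hs : ∀ m, s (m + 2) = a * s (m + 1) - b * s m) :
    (1 - C a * X + C b * X ^ 2) * PowerSeries.mk s = C (s 0) + C (s 1 - a * s 0) * X := by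
  ext (_ | _ | m)
  · simp
  · simp [sub_mul, add_mul, mul_assoc, coeff_X_pow_mul', coeff_C]
  · simp [sub_mul, add_mul, mul_assoc, coeff_X_pow_mul', hs]

theorem fib_add_four_add_fib (k : ℕ) : Nat.fib (k + 4) + Nat.fib k = 3 * Nat.fib (k + 2) := by
  have h2 : Nat.fib (k + 2) = Nat.fib k + Nat.fib (k + 1) := Nat.fib_add_two
  have h3 : Nat.fib (k + 3) = Nat.fib (k + 1) + Nat.fib (k + 2) := Nat.fib_add_two
  have h4 : Nat.fib (k + 4) = Nat.fib (k + 2) + Nat.fib (k + 3) := Nat.fib_add_two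
  omega

theorem one_sub_three_mul_X_add_X_sq_mul_mk_fib :
    (1 - 3 * PowerSeries.X + PowerSeries.X ^ 2) *
      PowerSeries.mk (fun m => (Nat.fib (2 * m + 2) : ℤ)) = 1 := by
  have hrec (m : ℕ) : (Nat.fib (2 * (m + 2) + 2) : ℤ) =
      3 * Nat.fib (2 * (m + 1) + 2) - 1 * Nat.fib (2 * m + 2) := by
    have := fib_add_four_add_fib (2 * m + 2)
    rw [show 2 * (m + 2) + 2 = 2 * m + 2 + 4 by ring, show 2 * (m + 1) + 2 = 2 * m + 2 + 2 by ring]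
    omega
  simpa [show Nat.fib 4 = 3 by rfl] using
    one_sub_C_mul_X_add_C_mul_X_sq_mul_mk (3 : ℤ) 1 (fun m => (Nat.fib (2 * m + 2) : ℤ)) hrec

/-- Letters `1, 2, 3` are encoded as `0, 1, 2 : Fin 3`, and the paper's `F m` is
`Nat.fib (m + 2)`. -/
theorem stmt9 (n : ℕ) :
    Nat.card {w : Fin (2 * n) → Fin 3 //
      ¬ ∃ i j : Fin (2 * n), (j : ℕ) = (i : ℕ) + 2 ∧ ((w j : ℕ) = (w i : ℕ) + 2)} =
      (Nat.fib (2 * n + 2)) ^ 2 ∧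
    (1 - 3 * PowerSeries.X + PowerSeries.X ^ 2) *
      PowerSeries.mk (fun m => (Nat.fib (2 * m + 2) : ℤ)) = 1 := by
  refine ⟨?_, one_sub_three_mul_X_add_X_sq_mul_mk_fib⟩
  have avoids_iff (w : Fin (2 * n) → Fin 3) :
      (¬ ∃ i j : Fin (2 * n), (j : ℕ) = i + 2 ∧ (w j : ℕ) = w i + 2) ↔
        ∀ i j : Fin (2 * n), (j : ℕ) = i + 2 → NotRiseTwo (w i) (w j) := by
    simp only [NotRiseTwo, not_exists, not_and, ne_eq]
  rw [Nat.card_congr (Equiv.subtypeEquivRight avoids_iff), card_forall_gap_eq_card_isChain_pow,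
    card_isChain_notRiseTwo]
end

section
/- The number of words of length 2n+1 over {1,2,3} with no index i such that w_{i+2} − w_i = 2 is F(2n)·F(2n+2), where the Fibonacci numbers are normalized by Σ_{n≥0} F(n)q^n = (1+q)/(1−q−q²). -/
/-!
The condition only compares letters two places apart, so a word of length `2n+1` splits into its
subwords at even and at odd positions, of lengths `n+1` and `n`, and each of them must avoid a `1`
immediately followed by a `3`. Counting such words by their first letter gives a transfer
recursion whose solution is `fib (2m+1)` for words of length `m+1` starting with `1` and
`fib (2m+2)` for those starting with `2` or `3`; hence there are `fib (2m+2) = F(2m)` words of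
length `m`.
-/

open List

section Chains

variable {α : Type*} [Fintype α] (R : α → α → Prop)

lemma card_subtype_fin_succ {m : ℕ} (P : α → (Fin m → α) → Prop) :
    Nat.card {u : Fin (m + 1) → α // P (u 0) (Fin.tail u)} =
      ∑ a, Nat.card {v : Fin m → α // P a v} :=
  calc Nat.card {u : Fin (m + 1) → α // P (u 0) (Fin.tail u)}
      _ = Nat.card {p : α × (Fin m → α) // P p.1 p.2} :=
        Nat.card_congr ((Fin.consEquiv fun _ => α).symm.subtypeEquiv fun _ => Iff.rfl)
      _ = Nat.card (Σ a, {v : Fin m → α // P a v}) :=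
        Nat.card_congr (Equiv.subtypeProdEquivSigmaSubtype P)
      _ = ∑ a, Nat.card {v : Fin m → α // P a v} := Nat.card_sigma

/-- The number of `R`-chains of length `m + 1` starting at `a`. -/
noncomputable def chainCount (m : ℕ) (a : α) : ℕ :=
  Nat.card {v : Fin m → α // (a :: ofFn v).IsChain R}

lemma chainCount_zero (a : α) : chainCount R 0 a = 1 := by
  simp [chainCount]

lemma chainCount_succ [DecidableRel R] (m : ℕ) (a : α) :
    chainCount R (m + 1) a = ∑ b, if R a b then chainCount R m b else 0 := by
  simp only [chainCount, ofFn_succ, isChain_cons_cons]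
  refine (card_subtype_fin_succ fun b v => R a b ∧ (b :: ofFn v).IsChain R).trans
    (Finset.sum_congr rfl fun b _ => ?_)
  by_cases h : R a b <;> simp [h]

lemma card_isChain_ofFn_succ (m : ℕ) :
    Nat.card {u : Fin (m + 1) → α // (ofFn u).IsChain R} = ∑ a, chainCount R m a := by
  simp only [ofFn_succ]
  exact card_subtype_fin_succ fun a v => (a :: ofFn v).IsChain R

end Chains

section Interleaving

variable {α : Type*} (R : α → α → Prop)

noncomputable def finSumFinEquivEvenOdd (m : ℕ) : Fin ((m + 1) / 2) ⊕ Fin (m / 2) ≃ Fin m :=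
  Equiv.ofBijective (Sum.elim (fun k => ⟨2 * k, by omega⟩) fun k => ⟨2 * k + 1, by omega⟩) <| by
    refine (Fintype.bijective_iff_injective_and_card _).2
      ⟨?_, by simp only [Fintype.card_sum, Fintype.card_fin]; omega⟩
    rintro (i | i) (j | j) h <;> simp [Fin.ext_iff] at h ⊢ <;> omega

lemma forall_add_two_iff_isChain {m : ℕ} (w : Fin m → α) :
    (∀ i j : Fin m, (j : ℕ) = i + 2 → R (w i) (w j)) ↔
      (ofFn fun k : Fin ((m + 1) / 2) => w ⟨2 * k, by omega⟩).IsChain R ∧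
        (ofFn fun k : Fin (m / 2) => w ⟨2 * k + 1, by omega⟩).IsChain R := by
  simp only [isChain_ofFn]
  constructor
  · intro h
    exact ⟨fun k hk => h _ _ (by dsimp only; omega), fun k hk => h _ _ (by dsimp only; omega)⟩
  · rintro ⟨heven, hodd⟩ i j hij
    obtain ⟨k, hk | hk⟩ := Nat.even_or_odd' i
    · convert heven k (by omega) using 2 <;> ext <;> dsimp only <;> omega
    · convert hodd k (by omega) using 2 <;> ext <;> dsimp only <;> omega

lemma card_forall_add_two (m : ℕ) :
    Nat.card {w : Fin m → α // ∀ i j : Fin m, (j : ℕ) = i + 2 → R (w i) (w j)} =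
      Nat.card {u : Fin ((m + 1) / 2) → α // (ofFn u).IsChain R} *
        Nat.card {v : Fin (m / 2) → α // (ofFn v).IsChain R} := by
  let split : (Fin m → α) ≃ (Fin ((m + 1) / 2) → α) × (Fin (m / 2) → α) :=
    ((finSumFinEquivEvenOdd m).arrowCongr (Equiv.refl α)).symm.trans
      (Equiv.sumArrowEquivProdArrow _ _ α)
  rw [← Nat.card_prod]
  exact Nat.card_congr
    ((split.subtypeEquiv (forall_add_two_iff_isChain R)).trans Equiv.subtypeProdEquivProd)

end Interleaving

abbrev NoRiseTwo (a b : Fin 3) : Prop := ¬(b : ℕ) = a + 2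

lemma fib_two_mul_succ_add_one (m : ℕ) :
    Nat.fib (2 * (m + 1) + 1) = Nat.fib (2 * m + 1) + Nat.fib (2 * m + 2) := by
  rw [show 2 * (m + 1) + 1 = 2 * m + 1 + 2 by ring, Nat.fib_add_two]

lemma fib_two_mul_succ_add_two (m : ℕ) :
    Nat.fib (2 * (m + 1) + 2) =
      Nat.fib (2 * m + 1) + Nat.fib (2 * m + 2) + Nat.fib (2 * m + 2) := by
  rw [Nat.fib_add_two, fib_two_mul_succ_add_one, mul_add_one]
  ring

lemma chainCount_noRiseTwo (m : ℕ) (a : Fin 3) :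
    chainCount NoRiseTwo m a = if a = 0 then Nat.fib (2 * m + 1) else Nat.fib (2 * m + 2) := by
  induction m generalizing a with
  | zero => simp [chainCount_zero]
  | succ m ih =>
    rw [chainCount_succ, Fin.sum_univ_three, ih, ih, ih, fib_two_mul_succ_add_two]
    fin_cases a <;> simp [fib_two_mul_succ_add_one]

lemma card_isChain_noRiseTwo (m : ℕ) :
    Nat.card {u : Fin m → Fin 3 // (ofFn u).IsChain NoRiseTwo} = Nat.fib (2 * m + 2) := by
  cases m with
  | zero => simp
  | succ m =>
    rw [card_isChain_ofFn_succ, Fin.sum_univ_three, chainCount_noRiseTwo, chainCount_noRiseTwo,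
      chainCount_noRiseTwo, fib_two_mul_succ_add_two]
    simp

/-- The letters `1, 2, 3` are encoded as `0, 1, 2 : Fin 3`, and `F(m) = Nat.fib (m + 2)`. -/
theorem stmt10 (n : ℕ) :
    Nat.card {w : Fin (2 * n + 1) → Fin 3 //
      ¬ ∃ i j : Fin (2 * n + 1), (j : ℕ) = (i : ℕ) + 2 ∧ ((w j : ℕ) = (w i : ℕ) + 2)} =
      Nat.fib (2 * n + 2) * Nat.fib (2 * n + 4) := by
  simp only [not_exists, not_and]
  rw [card_forall_add_two (R := NoRiseTwo), card_isChain_noRiseTwo, card_isChain_noRiseTwo,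
    show (2 * n + 1 + 1) / 2 = n + 1 by omega, show (2 * n + 1) / 2 = n by omega]
  ring_nf
end

section
/- The generating function B_3(q,z) = Σ_w q^{|w|} z^{t(w)}, summed over all words w over {1,2,3}, where t(w) counts indices i with w_{i+1} − w_i = 2, equals 1/(1 − 3q − q²(z−1)). -/
/-!
Let `f(n) = Σ_{|w| = n} z^{t(w)}`. Splitting off the first letter, `t(c w) = t(w) + [c = 1 ∧ w₁ = 3]`,
so summing over `c` gives `f(n+2) = 3 f(n+1) + (z - 1) f(n)`: the words of length `n + 1` starting
with `3` contribute exactly `f(n)`, since no `13` starts at a `3`. Together with `f(0) = 1` and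
`f(1) = 3`, this recurrence says `(1 - 3q - (z - 1)q²) Σ f(n) qⁿ = 1`.
-/

/-- For a word `w` of length `n` over {1,2,3} (modeled as `Fin n → Fin 3`,
letters `(w i : ℕ) + 1`), `tStat w = |{i : w_{i+1} − w_i = 2}|`. -/
noncomputable def tStat {n : ℕ} (w : Fin n → Fin 3) : ℕ :=
  Nat.card {ij : Fin n × Fin n //
    (ij.2 : ℕ) = (ij.1 : ℕ) + 1 ∧ ((w ij.2 : ℕ) = (w ij.1 : ℕ) + 2)}

theorem PowerSeries.mul_mk_eq_one_of_recurrence {R : Type*} [CommRing R] {p r : R} {a : ℕ → R}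
    (h0 : a 0 = 1) (h1 : a 1 = p) (hrec : ∀ n, a (n + 2) = p * a (n + 1) + r * a n) :
    (1 - C p * X - C r * X ^ 2) * mk a = 1 := by
  ext n
  rw [sub_mul, sub_mul, mul_comm (C p) X, mul_comm (C r), mul_assoc, mul_assoc, map_sub, map_sub,
    one_mul, coeff_X_pow_mul', ← pow_one X, coeff_X_pow_mul', coeff_C_mul, coeff_C_mul, coeff_one]
  rcases n with _ | _ | n
  · simp [h0]
  · simp [h0, h1]
  · simp [hrec]

section SumOverWords

variable {α M : Type*} [Fintype α] [AddCommMonoid M] {n : ℕ}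

theorem sum_fun_fin_succ (f : (Fin (n + 1) → α) → M) :
    ∑ w, f w = ∑ c, ∑ w : Fin n → α, f (Fin.cons c w) := by
  rw [← Fintype.sum_prod_type']
  exact (Fintype.sum_equiv (Fin.consEquiv fun _ => α) _ f fun _ => rfl).symm

theorem sum_fun_fin_succ_ite_apply_zero [DecidableEq α] (c : α) (f : (Fin (n + 1) → α) → M) :
    ∑ w : Fin (n + 1) → α, (if w 0 = c then f w else 0) = ∑ w : Fin n → α, f (Fin.cons c w) := by
  simp [sum_fun_fin_succ]

end SumOverWords

theorem tStat_eq_sum {n : ℕ} (w : Fin (n + 1) → Fin 3) :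
    tStat w = ∑ i : Fin n, if (w i.succ : ℕ) = w i.castSucc + 2 then 1 else 0 := by
  classical
  rw [Finset.sum_boole, Nat.cast_id, ← Fintype.card_subtype, tStat, Nat.card_eq_fintype_card]
  refine Fintype.card_congr
    { toFun := fun ij => ⟨⟨ij.1.1, by omega⟩, ?_⟩
      invFun := fun i => ⟨(i.1.castSucc, i.1.succ), rfl, i.2⟩
      left_inv := ?_
      right_inv := fun i => rfl }
  · obtain ⟨⟨i, j⟩, hij : (j : ℕ) = i + 1, hw⟩ := ij
    convert hw using 4 <;> ext <;> simp [hij]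
  · rintro ⟨⟨i, j⟩, hij : (j : ℕ) = i + 1, -⟩
    ext <;> simp [hij]

theorem tStat_cons {n : ℕ} (c : Fin 3) (w : Fin (n + 1) → Fin 3) :
    tStat (Fin.cons c w : Fin (n + 2) → Fin 3) = tStat w + if (w 0 : ℕ) = c + 2 then 1 else 0 := by
  rw [tStat_eq_sum, tStat_eq_sum, Fin.sum_univ_succ, add_comm]
  simp only [Fin.succ_zero_eq_one, Fin.castSucc_zero, Fin.cons_zero, Fin.cons_one,
    ← Fin.succ_castSucc, Fin.cons_succ]

theorem tStat_cons_two {n : ℕ} (w : Fin n → Fin 3) :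
    tStat (Fin.cons 2 w : Fin (n + 1) → Fin 3) = tStat w := by
  cases n with
  | zero => simp [tStat]
  | succ n => rw [tStat_cons, if_neg (by omega), add_zero]

open Polynomial

noncomputable def tStatPoly (n : ℕ) : ℤ[X] :=
  ∑ w : Fin n → Fin 3, X ^ tStat w

theorem tStatPoly_zero : tStatPoly 0 = 1 := by
  simp [tStatPoly, tStat]

theorem tStatPoly_one : tStatPoly 1 = 3 := by
  simp [tStatPoly, tStat_eq_sum]

theorem sum_X_pow_ite_eq (d : Fin 3) :
    ∑ c : Fin 3, (X : ℤ[X]) ^ (if (d : ℕ) = c + 2 then 1 else 0)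
      = 3 + (X - 1) * if d = 2 then 1 else 0 := by
  fin_cases d <;> simp [Fin.sum_univ_three]
  ring

theorem tStatPoly_add_two (n : ℕ) :
    tStatPoly (n + 2) = 3 * tStatPoly (n + 1) + (X - 1) * tStatPoly n := by
  calc tStatPoly (n + 2)
      = ∑ w : Fin (n + 1) → Fin 3, X ^ tStat w *
          ∑ c : Fin 3, X ^ (if (w 0 : ℕ) = c + 2 then 1 else 0) := by
        simp only [tStatPoly, sum_fun_fin_succ (n := n + 1), tStat_cons, pow_add, Finset.mul_sum]
        exact Finset.sum_comm
    _ = 3 * tStatPoly (n + 1) + (X - 1) *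
          ∑ w : Fin (n + 1) → Fin 3, if w 0 = 2 then X ^ tStat w else 0 := by
        simp only [sum_X_pow_ite_eq, tStatPoly, Finset.mul_sum, ← Finset.sum_add_distrib]
        refine Finset.sum_congr rfl fun w _ => ?_
        split_ifs <;> ring
    _ = 3 * tStatPoly (n + 1) + (X - 1) * tStatPoly n := by
        simp only [sum_fun_fin_succ_ite_apply_zero, tStat_cons_two, tStatPoly]

/-- `B_3(q,z) = Σ_w q^{|w|} z^{t(w)} = 1/(1 − 3q − q²(z−1))`, as an identity of
formal power series in `q` over `ℤ[z]`. -/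
theorem stmt12 :
    (1 - 3 * PowerSeries.X - PowerSeries.X ^ 2 *
        (PowerSeries.C (Polynomial.X : Polynomial ℤ) - 1)) *
    PowerSeries.mk (fun n => ∑ w : Fin n → Fin 3,
        (Polynomial.X : Polynomial ℤ) ^ tStat w) = 1 := by
  have h := PowerSeries.mul_mk_eq_one_of_recurrence tStatPoly_zero tStatPoly_one tStatPoly_add_two
  show _ * PowerSeries.mk tStatPoly = 1
  convert h using 2
  simp only [map_sub, map_one, map_ofNat]
  ring
end
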